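/- arXiv:1505.06073 — 4 statements merged into one kernel-verified Lean document; each statement's English description precedes it below -/
import Mathlib

section
/- For all c > 0, β > 0, every p ≥ 1 and every p-tuple v₁, …, v_p of points of ℂ, the determinant of the p × p matrix (K_{c,β}(v_i, v_j))_{1 ≤ i,j ≤ p} is a real number satisfying 0 ≤ det(K_{c,β}(v_i, v_j)) ≤ (c/π)^p. -/
open Complex

/-- The β-Ginibre kernel: `K_{c,β}(x,y) = (c/π)·exp(−(c/(2β))·(|x|²+|y|²))·exp((c/β)·x·conj(y))`. -/
noncomputable def ginibreKernel (c β : ℝ) (x y : ℂ) : ℂ :=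
  ((c / Real.pi : ℝ) : ℂ) *
    Complex.exp (((-(c / (2 * β)) * (‖x‖ ^ 2 + ‖y‖ ^ 2) : ℝ)) : ℂ) *
    Complex.exp (((c / β : ℝ) : ℂ) * x * (starRingEnd ℂ y))

/-!
Write `(K_{c,β}(v_i, v_j)) = (c/π) • N`. The matrix `N` has unit diagonal and is positive
semidefinite: up to a congruence by the diagonal Gaussian factors it is `(exp (t v_i conj v_j))`
with `t = c/β ≥ 0`, and the power series of `exp` writes this as a convergent sum of the rank-one
positive semidefinite matrices `(t v_i conj v_j)^n / n!`. Hence the eigenvalues of `N` are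
nonnegative with sum `tr N = p`, and `det N = ∏ λ_i ≤ ∏ exp (λ_i - 1) = 1`.
-/

open Matrix Finset
open scoped ComplexOrder ComplexConjugate Nat

theorem Real.prod_le_one_of_sum_eq_card {ι : Type*} (s : Finset ι) {z : ι → ℝ}
    (hz : ∀ i ∈ s, 0 ≤ z i) (hsum : ∑ i ∈ s, z i = #s) : ∏ i ∈ s, z i ≤ 1 :=
  calc ∏ i ∈ s, z i
      ≤ ∏ i ∈ s, Real.exp (z i - 1) :=
        prod_le_prod hz fun i _ => by linarith [Real.add_one_le_exp (z i - 1)]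
    _ = 1 := by rw [← Real.exp_sum, sum_sub_distrib, hsum]; simp

namespace Matrix

variable {ι 𝕜 : Type*} [Fintype ι]

theorem PosSemidef.det_le_one_of_diag_eq_one [RCLike 𝕜] [DecidableEq ι] {A : Matrix ι ι 𝕜}
    (hA : A.PosSemidef) (hdiag : ∀ i, A i i = 1) : A.det ≤ 1 := by
  have htrace : ∑ i, hA.isHermitian.eigenvalues i = Fintype.card ι := by
    have := hA.isHermitian.trace_eq_sum_eigenvalues
    simp only [trace, diag, hdiag, sum_const, card_univ, nsmul_one] at this
    exact_mod_cast this.symm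
  rw [hA.isHermitian.det_eq_prod_eigenvalues, ← RCLike.ofReal_prod, ← RCLike.ofReal_one,
    RCLike.ofReal_le_ofReal]
  exact Real.prod_le_one_of_sum_eq_card _ (fun i _ => hA.eigenvalues_nonneg i) htrace

theorem posSemidef_exp_mul_conj (z : ι → ℂ) :
    (of fun i j => exp (z i * conj (z j))).PosSemidef := by
  refine .of_dotProduct_mulVec_nonneg ?_ fun x => ?_
  · ext i j
    rw [conjTranspose_apply, of_apply, of_apply, RCLike.star_def, ← Complex.exp_conj, map_mul,
      conj_conj, mul_comm]
  · set s : ℕ → ℂ := fun n => ∑ j, conj (z j) ^ n * x j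
    have hseries : HasSum (fun n => ∑ i, ∑ j, star (x i) * ((z i * conj (z j)) ^ n / n !) * x j)
        (star x ⬝ᵥ (of (fun i j => exp (z i * conj (z j))) *ᵥ x)) := by
      simp only [dotProduct, mulVec, of_apply, mul_sum, ← mul_assoc]
      refine hasSum_sum fun i _ => hasSum_sum fun j _ => (HasSum.mul_left _ ?_).mul_right _
      rw [exp_eq_exp_ℂ]
      exact NormedSpace.expSeries_div_hasSum_exp _
    have hterm : ∀ n, ∑ i, ∑ j, star (x i) * ((z i * conj (z j)) ^ n / n !) * x j
        = (n ! : ℂ)⁻¹ * (star (s n) * s n) := by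
      intro n
      simp only [s, star_sum, star_mul', sum_mul, mul_sum, RCLike.star_def, map_pow, conj_conj]
      rw [sum_comm]
      refine sum_congr rfl fun i _ => sum_congr rfl fun j _ => ?_
      ring
    simp only [hterm] at hseries
    exact hseries.nonneg fun n => mul_nonneg (by positivity) (star_mul_self_nonneg _)

end Matrix

noncomputable def ginibreCorrelation {ι : Type*} (c β : ℝ) (v : ι → ℂ) : Matrix ι ι ℂ :=
  of fun i j => exp ((-(c / (2 * β)) * (‖v i‖ ^ 2 + ‖v j‖ ^ 2) : ℝ)) *
    exp ((c / β : ℝ) * v i * conj (v j))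

section
variable {ι : Type*} (c β : ℝ) (v : ι → ℂ)

theorem of_ginibreKernel_eq_smul :
    of (fun i j => ginibreKernel c β (v i) (v j)) =
      ((c / Real.pi : ℝ) : ℂ) • ginibreCorrelation c β v := by
  ext i j
  simp [ginibreKernel, ginibreCorrelation, mul_assoc]

theorem ginibreCorrelation_apply_self (i : ι) : ginibreCorrelation c β v i i = 1 := by
  rw [ginibreCorrelation, of_apply, ← exp_add, mul_assoc, mul_conj, normSq_eq_norm_sq]
  push_cast
  ring_nf
  exact exp_zero

theorem ginibreCorrelation_posSemidef [Fintype ι] (h : 0 ≤ c / β) :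
    (ginibreCorrelation c β v).PosSemidef := by
  classical
  set D : Matrix ι ι ℂ := diagonal fun i => (Real.exp (-(c / (2 * β)) * ‖v i‖ ^ 2) : ℂ)
  set z : ι → ℂ := fun i => Real.sqrt (c / β) * v i
  have hfactor : ginibreCorrelation c β v = D * of (fun i j => exp (z i * conj (z j))) * Dᴴ := by
    ext i j
    have hsqrt : (Real.sqrt (c / β) : ℂ) * conj (Real.sqrt (c / β) : ℂ) = (c / β : ℝ) := by
      rw [conj_ofReal, ← ofReal_mul, Real.mul_self_sqrt h]
    simp only [ginibreCorrelation, D, z, diagonal_conjTranspose, diagonal_mul, mul_diagonal,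
      of_apply, Pi.star_apply, RCLike.star_def, conj_ofReal]
    rw [map_mul, mul_mul_mul_comm, hsqrt, ofReal_exp, ofReal_exp, ← exp_add, ← exp_add,
      ← exp_add]
    congr 1
    push_cast
    ring
  rw [hfactor]
  exact (posSemidef_exp_mul_conj z).mul_mul_conjTranspose_same D

end

theorem ginibre_kernel_det_bounds_general (c β : ℝ) (hc : 0 < c) (hβ : 0 < β)
    (p : ℕ) (v : Fin p → ℂ) :
    ((Matrix.of fun i j => ginibreKernel c β (v i) (v j)).det).im = 0 ∧
    0 ≤ ((Matrix.of fun i j => ginibreKernel c β (v i) (v j)).det).re ∧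
    ((Matrix.of fun i j => ginibreKernel c β (v i) (v j)).det).re ≤ (c / Real.pi) ^ p := by
  have hN := ginibreCorrelation_posSemidef c β v (div_nonneg hc.le hβ.le)
  have hscale : (0 : ℂ) ≤ ((c / Real.pi : ℝ) : ℂ) ^ p := by
    have : 0 ≤ c / Real.pi := div_nonneg hc.le Real.pi_pos.le
    positivity
  have hdet : 0 ≤ (of fun i j => ginibreKernel c β (v i) (v j)).det ∧
      (of fun i j => ginibreKernel c β (v i) (v j)).det ≤ ((c / Real.pi : ℝ) : ℂ) ^ p := by
    rw [of_ginibreKernel_eq_smul, det_smul, Fintype.card_fin]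
    refine ⟨mul_nonneg hscale hN.det_nonneg, ?_⟩
    simpa using mul_le_mul_of_nonneg_left
      (hN.det_le_one_of_diag_eq_one (ginibreCorrelation_apply_self c β v)) hscale
  obtain ⟨⟨hre0, him0⟩, ⟨hre1, -⟩⟩ := And.imp Complex.le_def.mp Complex.le_def.mp hdet
  norm_cast at hre1
  exact ⟨him0.symm, hre0, hre1⟩

/-- The determinant of the matrix of β-Ginibre kernel values (the `p`-th joint
correlation function) is a real number in `[0, (c/π)^p]`. -/
theorem ginibre_kernel_det_bounds (c β : ℝ) (hc : 0 < c) (hβ : 0 < β)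
    (p : ℕ) (hp : 1 ≤ p) (v : Fin p → ℂ) :
    ((Matrix.of fun i j => ginibreKernel c β (v i) (v j)).det).im = 0 ∧
    0 ≤ ((Matrix.of fun i j => ginibreKernel c β (v i) (v j)).det).re ∧
    ((Matrix.of fun i j => ginibreKernel c β (v i) (v j)).det).re ≤ (c / Real.pi) ^ p :=
  ginibre_kernel_det_bounds_general c β hc hβ p v
end

section
/- Fix c > 0 and r > 0. Then the map β ↦ (1 − β + β·exp(−(c/β)·r²))^{−1} is monotone nondecreasing on (0,1]; that is, the repulsion of the β-Ginibre point process, as measured by its J-function, increases with β. -/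
/-- The J-function of the β-Ginibre point process of intensity `c/π`:
`J(r) = (1 − β + β·exp(−(c/β)·r²))⁻¹`. -/
noncomputable def ginibreJ (c β r : ℝ) : ℝ :=
  (1 - β + β * Real.exp (-(c / β) * r ^ 2))⁻¹

/-!
With `a = c r²` the reciprocal of `J` is `D(β) = 1 − β + β·exp(−a/β)`, whose derivative is
`exp(−x)(x + 1) − 1` at `x = a/β`. This is `≤ 0` because `x + 1 ≤ exp x`, so `D` decreases on
`(0, ∞)`; being positive on `(0, 1]`, its reciprocal increases there.
-/

open Real Set

theorem Real.exp_neg_mul_add_one_le_one (x : ℝ) : exp (-x) * (x + 1) ≤ 1 :=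
  calc exp (-x) * (x + 1) ≤ exp (-x) * exp x :=
        mul_le_mul_of_nonneg_left (add_one_le_exp x) (exp_pos _).le
    _ = 1 := by rw [← exp_add, neg_add_cancel, exp_zero]

theorem hasDerivAt_one_sub_add_mul_exp_neg_div (a : ℝ) {β : ℝ} (hβ : β ≠ 0) :
    HasDerivAt (fun β => 1 - β + β * exp (-(a / β))) (exp (-(a / β)) * (a / β + 1) - 1) β := by
  have hquot := ((hasDerivAt_const β a).fun_div (hasDerivAt_id' β) hβ).fun_neg
  refine (((hasDerivAt_id' β).const_sub 1).fun_add
    ((hasDerivAt_id' β).fun_mul hquot.exp)).congr_deriv ?_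
  field_simp
  ring

theorem antitoneOn_one_sub_add_mul_exp_neg_div (a : ℝ) :
    AntitoneOn (fun β => 1 - β + β * exp (-(a / β))) (Ioi 0) := by
  have hderiv (β : ℝ) (hβ : β ∈ Ioi 0) := hasDerivAt_one_sub_add_mul_exp_neg_div a (ne_of_gt hβ)
  refine antitoneOn_of_hasDerivWithinAt_nonpos (f' := fun β => exp (-(a / β)) * (a / β + 1) - 1)
    (convex_Ioi 0)
    (fun β hβ => (hderiv β hβ).continuousAt.continuousWithinAt) (fun β hβ => ?_) (fun β hβ => ?_)
  · rw [interior_Ioi] at hβ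
    exact (hderiv β hβ).hasDerivWithinAt
  · linarith [exp_neg_mul_add_one_le_one (a / β)]

theorem ginibreJ_monotone_in_beta_general (c r : ℝ) :
    MonotoneOn (fun β : ℝ => ginibreJ c β r) (Set.Ioc (0 : ℝ) 1) := by
  intro x hx y hy hxy
  have hpos : 0 < 1 - y + y * exp (-(c / y) * r ^ 2) := by
    linarith [hy.2, mul_pos hy.1 (exp_pos (-(c / y) * r ^ 2))]
  have hanti := antitoneOn_one_sub_add_mul_exp_neg_div (c * r ^ 2) hx.1 hy.1 hxy
  simp only [ginibreJ]
  exact inv_anti₀ hpos (by simpa only [neg_mul, div_mul_eq_mul_div] using hanti)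

/-- For fixed `c > 0` and `r > 0`, the repulsion measured by the J-function
increases with `β` on `(0,1]`. -/
theorem ginibreJ_monotone_in_beta (c r : ℝ) (hc : 0 < c) (hr : 0 < r) :
    MonotoneOn (fun β : ℝ => ginibreJ c β r) (Set.Ioc (0 : ℝ) 1) :=
  ginibreJ_monotone_in_beta_general c r
end

section
/- Let M > 0, E ≥ 0, c ≥ 0 and t ≥ 0. Let (c_i)_{i ≥ 1} be a sequence of real numbers with 0 < c_i ≤ M for all i and such that (1/n)·Σ_{i=1}^n c_i converges to c as n → ∞. Let (ε_{n,i}) be real numbers with |ε_{n,i}| ≤ E for all n and 1 ≤ i ≤ n. Then the products Π_{i=1}^n (1 − c_i·t/n + ε_{n,i}/n²) converge to e^{−c·t} as n → ∞. -/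
/-!
Write the `i`-th factor as `1 + a n i` with `a n i = -cᵢ t / n + ε n i / n²`. Then
`∑ᵢ a n i → -c t` by the hypothesis on the averages, while `|a n i| = O(1/n)` gives
`∑ᵢ (a n i)² = O(1/n) → 0`. Since `log (1 + a) = a + O(a²)`, the logarithm of the product
tends to `-c t`.
-/

open Filter Finset Real Topology

theorem Real.abs_log_one_add_sub_self_le {x : ℝ} (hx : |x| ≤ 1 / 2) :
    |log (1 + x) - x| ≤ 2 * x ^ 2 := by
  have hTaylor := abs_log_sub_add_sum_range_le (x := -x) (by rw [abs_neg]; linarith) 1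
  calc |log (1 + x) - x| = |-x + log (1 + x)| := by rw [neg_add_eq_sub]
    _ ≤ |x| ^ 2 / (1 - |x|) := by simpa using hTaylor
    _ ≤ |x| ^ 2 / (1 / 2) := by gcongr; linarith
    _ = 2 * x ^ 2 := by rw [sq_abs]; ring

section TriangularArray

variable {α ι : Type*} {l : Filter α} {s : α → Finset ι} {a : α → ι → ℝ} {L : ℝ}

theorem eventually_abs_le_half_of_tendsto_sum_sq
    (hsq : Tendsto (fun n ↦ ∑ i ∈ s n, a n i ^ 2) l (𝓝 0)) :
    ∀ᶠ n in l, ∀ i ∈ s n, |a n i| ≤ 1 / 2 := by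
  filter_upwards [hsq.eventually_le_const (by norm_num : (0 : ℝ) < (1 / 2) ^ 2)] with n hn i hi
  have hai : a n i ^ 2 ≤ (1 / 2) ^ 2 :=
    (single_le_sum (fun j _ ↦ sq_nonneg (a n j)) hi).trans hn
  simpa using sq_le_sq.mp hai

theorem tendsto_sum_log_one_add_of_tendsto_sum
    (hsum : Tendsto (fun n ↦ ∑ i ∈ s n, a n i) l (𝓝 L))
    (hsq : Tendsto (fun n ↦ ∑ i ∈ s n, a n i ^ 2) l (𝓝 0)) :
    Tendsto (fun n ↦ ∑ i ∈ s n, log (1 + a n i)) l (𝓝 L) := by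
  have herr : Tendsto (fun n ↦ ∑ i ∈ s n, (log (1 + a n i) - a n i)) l (𝓝 0) := by
    refine squeeze_zero_norm' ?_ (by simpa using hsq.const_mul 2)
    filter_upwards [eventually_abs_le_half_of_tendsto_sum_sq hsq] with n hn
    rw [mul_sum]
    exact norm_sum_le_of_le _ fun i hi ↦ abs_log_one_add_sub_self_le (hn i hi)
  simpa [sum_sub_distrib] using herr.add hsum

theorem tendsto_prod_one_add_of_tendsto_sum
    (hsum : Tendsto (fun n ↦ ∑ i ∈ s n, a n i) l (𝓝 L))
    (hsq : Tendsto (fun n ↦ ∑ i ∈ s n, a n i ^ 2) l (𝓝 0)) :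
    Tendsto (fun n ↦ ∏ i ∈ s n, (1 + a n i)) l (𝓝 (exp L)) := by
  refine ((continuous_exp.tendsto L).comp
    (tendsto_sum_log_one_add_of_tendsto_sum hsum hsq)).congr' ?_
  filter_upwards [eventually_abs_le_half_of_tendsto_sum_sq hsq] with n hn
  rw [Function.comp_apply, exp_sum]
  refine prod_congr rfl fun i hi ↦ exp_log ?_
  linarith [neg_abs_le (a n i), hn i hi]

end TriangularArray

theorem tendsto_sum_range_of_abs_le_div_sq {x : ℕ → ℕ → ℝ} {K : ℝ}
    (hx : ∀ n i, i < n → |x n i| ≤ K / (n : ℝ) ^ 2) :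
    Tendsto (fun n ↦ ∑ i ∈ range n, x n i) atTop (𝓝 0) := by
  refine squeeze_zero_norm (a := fun n : ℕ ↦ K / n) (fun n ↦ ?_)
    (tendsto_const_nhds.div_atTop tendsto_natCast_atTop_atTop)
  calc ‖∑ i ∈ range n, x n i‖ ≤ ∑ _i ∈ range n, K / (n : ℝ) ^ 2 :=
        norm_sum_le_of_le _ fun i hi ↦ hx n i (mem_range.mp hi)
    _ = K / n := by
      rcases eq_or_ne (n : ℝ) 0 with hn | hn
      · simp [hn]
      · rw [sum_const, card_range, nsmul_eq_mul]; field_simp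

theorem tendsto_sum_range_sq_of_abs_le_div {x : ℕ → ℕ → ℝ} {K : ℝ}
    (hx : ∀ n i, i < n → |x n i| ≤ K / n) :
    Tendsto (fun n ↦ ∑ i ∈ range n, x n i ^ 2) atTop (𝓝 0) := by
  refine tendsto_sum_range_of_abs_le_div_sq (K := K ^ 2) fun n i hi ↦ ?_
  rw [abs_of_nonneg (sq_nonneg _), ← div_pow, ← sq_abs]
  exact pow_le_pow_left₀ (abs_nonneg _) (hx n i hi) 2

theorem void_probability_product_tendsto_general (M E c t : ℝ)
    (hE : 0 ≤ E)
    (ci : ℕ → ℝ) (hci : ∀ i, 0 < ci i ∧ ci i ≤ M)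
    (havg : Tendsto (fun n : ℕ => (∑ i ∈ Finset.range n, ci i) / n) atTop (nhds c))
    (ε : ℕ → ℕ → ℝ) (hε : ∀ n i, i < n → |ε n i| ≤ E) :
    Tendsto
      (fun n : ℕ => ∏ i ∈ Finset.range n, (1 - ci i * t / n + ε n i / (n : ℝ) ^ 2))
      atTop (nhds (Real.exp (-(c * t)))) := by
  set a : ℕ → ℕ → ℝ := fun n i ↦ -(ci i * t / n) + ε n i / (n : ℝ) ^ 2
  have hεn : ∀ n i, i < n → |ε n i / (n : ℝ) ^ 2| ≤ E / (n : ℝ) ^ 2 := fun n i hi ↦ by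
    rw [abs_div, abs_of_nonneg (sq_nonneg (n : ℝ))]; gcongr; exact hε n i hi
  have hsum : Tendsto (fun n ↦ ∑ i ∈ range n, a n i) atTop (𝓝 (-(c * t))) := by
    simpa [a, sum_add_distrib, ← sum_div, ← sum_mul, mul_div_right_comm] using
      (havg.mul_const t).neg.add (tendsto_sum_range_of_abs_le_div_sq hεn)
  have ha : ∀ n i, i < n → |a n i| ≤ (M * |t| + E) / n := fun n i hi ↦ by
    have hn : (1 : ℝ) ≤ n := by exact_mod_cast Nat.one_le_of_lt hi
    calc |a n i| ≤ |ci i| * |t| / n + E / (n : ℝ) ^ 2 := by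
          refine (abs_add_le _ _).trans (add_le_add ?_ (hεn n i hi))
          rw [abs_neg, abs_div, abs_mul, Nat.abs_cast]
      _ ≤ M * |t| / n + E / n := by
          rw [abs_of_pos (hci i).1]
          gcongr
          · exact (hci i).2
          · exact le_self_pow₀ hn two_ne_zero
      _ = (M * |t| + E) / n := by ring
  convert tendsto_prod_one_add_of_tendsto_sum hsum (tendsto_sum_range_sq_of_abs_le_div ha)
    using 3
  ring

/-- Void probabilities of superposed β-Ginibre processes converge to the Poisson void
probability: if `0 < c_i ≤ M`, `(1/n)Σ_{i<n} c_i → c`, and `|ε_{n,i}| ≤ E`, then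
`Π_{i<n} (1 − c_i t/n + ε_{n,i}/n²) → e^{−ct}`. -/
theorem void_probability_product_tendsto (M E c t : ℝ)
    (hM : 0 < M) (hE : 0 ≤ E) (hc : 0 ≤ c) (ht : 0 ≤ t)
    (ci : ℕ → ℝ) (hci : ∀ i, 0 < ci i ∧ ci i ≤ M)
    (havg : Tendsto (fun n : ℕ => (∑ i ∈ Finset.range n, ci i) / n) atTop (nhds c))
    (ε : ℕ → ℕ → ℝ) (hε : ∀ n i, i < n → |ε n i| ≤ E) :
    Tendsto
      (fun n : ℕ => ∏ i ∈ Finset.range n, (1 - ci i * t / n + ε n i / (n : ℝ) ^ 2))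
      atTop (nhds (Real.exp (-(c * t)))) :=
  void_probability_product_tendsto_general M E c t hE ci hci havg ε hε
end

section
/- Let M > 0, c ≥ 0 and t ≥ 0. Let (c_i)_{i ≥ 1} be a sequence of real numbers with 0 < c_i ≤ M for all i and such that (1/n)·Σ_{i=1}^n c_i converges to c as n → ∞. Then Σ_{i=1}^n (c_i·t/n)·Π_{j=1, j≠i}^n (1 − c_j·t/n) converges to c·t·e^{−c·t} as n → ∞. -/
/-! Write `x n i = c_i t / n`. These are `O(1/n)`, so `∑_i x n i → ct` while
`∑_i (x n i)² → 0`. Since `log (1 - x) = -x + O(x²)` and `x / (1 - x) = x + O(x²)`, it follows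
that `∏_i (1 - x n i) → e^{-ct}` and `∑_i x n i / (1 - x n i) → ct`, and the sum in question is
the product of these two limits. -/

open Filter Finset Real Topology

lemma abs_log_one_sub_add_le {x : ℝ} (hx : |x| ≤ 1 / 2) : |log (1 - x) + x| ≤ 2 * x ^ 2 := by
  have h := abs_log_sub_add_sum_range_le (hx.trans_lt (by norm_num)) 1
  simp only [range_one, sum_singleton, zero_add, pow_one, Nat.cast_zero, div_one, Nat.reduceAdd,
    sq_abs] at h
  rw [add_comm]
  refine h.trans ?_
  rw [div_le_iff₀ (by linarith)]
  nlinarith [mul_le_mul_of_nonneg_left hx (sq_nonneg x)]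

lemma abs_div_one_sub_sub_le {x : ℝ} (hx : |x| ≤ 1 / 2) : |x / (1 - x) - x| ≤ 2 * x ^ 2 := by
  have hpos : 0 < 1 - x := by linarith [le_abs_self x]
  have : x / (1 - x) - x = x ^ 2 / (1 - x) := by field_simp; ring
  rw [this, abs_of_nonneg (by positivity), div_le_iff₀ hpos]
  nlinarith [mul_le_mul_of_nonneg_left ((le_abs_self x).trans hx) (sq_nonneg x)]

lemma Finset.sum_mul_prod_erase_one_sub {ι 𝕜 : Type*} [DecidableEq ι] [Field 𝕜]
    (s : Finset ι) (x : ι → 𝕜) (hx : ∀ i ∈ s, x i ≠ 1) :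
    ∑ i ∈ s, x i * ∏ j ∈ s.erase i, (1 - x j) =
      (∏ j ∈ s, (1 - x j)) * ∑ i ∈ s, x i / (1 - x i) := by
  rw [mul_sum]
  refine sum_congr rfl fun i hi => ?_
  rw [← mul_prod_erase s _ hi]
  field_simp [sub_ne_zero.2 (hx i hi).symm]

section TriangularArray

variable {α ι : Type*} {l : Filter α} {s : α → Finset ι} {x : α → ι → ℝ} {μ : ℝ}

lemma eventually_abs_le_of_tendsto_sum_sq
    (hsq : Tendsto (fun a => ∑ i ∈ s a, x a i ^ 2) l (𝓝 0)) {ε : ℝ} (hε : 0 < ε) :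
    ∀ᶠ a in l, ∀ i ∈ s a, |x a i| ≤ ε := by
  filter_upwards [hsq.eventually (gt_mem_nhds (pow_pos hε 2))] with a ha i hi
  exact abs_le_of_sq_le_sq ((single_le_sum (fun j _ => sq_nonneg (x a j)) hi).trans ha.le) hε.le

lemma tendsto_sum_of_abs_sub_le_two_mul_sq (φ : ℝ → ℝ)
    (hφ : ∀ y, |y| ≤ 1 / 2 → |φ y - y| ≤ 2 * y ^ 2)
    (hsum : Tendsto (fun a => ∑ i ∈ s a, x a i) l (𝓝 μ))
    (hsq : Tendsto (fun a => ∑ i ∈ s a, x a i ^ 2) l (𝓝 0)) :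
    Tendsto (fun a => ∑ i ∈ s a, φ (x a i)) l (𝓝 μ) := by
  have herr : Tendsto (fun a => ∑ i ∈ s a, (φ (x a i) - x a i)) l (𝓝 0) := by
    refine squeeze_zero_norm' ?_ (by simpa using hsq.const_mul 2)
    filter_upwards [eventually_abs_le_of_tendsto_sum_sq hsq one_half_pos] with a ha
    rw [mul_sum]
    exact (norm_sum_le _ _).trans (sum_le_sum fun i hi => hφ _ (ha i hi))
  simpa using hsum.add herr

theorem tendsto_prod_one_sub (hsum : Tendsto (fun a => ∑ i ∈ s a, x a i) l (𝓝 μ))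
    (hsq : Tendsto (fun a => ∑ i ∈ s a, x a i ^ 2) l (𝓝 0)) :
    Tendsto (fun a => ∏ i ∈ s a, (1 - x a i)) l (𝓝 (exp (-μ))) := by
  have hlog := tendsto_sum_of_abs_sub_le_two_mul_sq (fun y => -log (1 - y))
    (fun y hy => by rw [← abs_neg]; convert abs_log_one_sub_add_le hy using 2; ring) hsum hsq
  refine ((continuous_exp.tendsto _).comp hlog.neg).congr' ?_
  filter_upwards [eventually_abs_le_of_tendsto_sum_sq hsq one_half_pos] with a ha
  simp only [Function.comp_apply, sum_neg_distrib, neg_neg, exp_sum]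
  exact prod_congr rfl fun i hi => exp_log (by linarith [le_abs_self (x a i), ha i hi])

theorem tendsto_sum_mul_prod_erase_one_sub [DecidableEq ι]
    (hsum : Tendsto (fun a => ∑ i ∈ s a, x a i) l (𝓝 μ))
    (hsq : Tendsto (fun a => ∑ i ∈ s a, x a i ^ 2) l (𝓝 0)) :
    Tendsto (fun a => ∑ i ∈ s a, x a i * ∏ j ∈ (s a).erase i, (1 - x a j)) l
      (𝓝 (μ * exp (-μ))) := by
  have hratio := tendsto_sum_of_abs_sub_le_two_mul_sq (fun y => y / (1 - y))
    (fun _ hy => abs_div_one_sub_sub_le hy) hsum hsq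
  rw [mul_comm]
  refine ((tendsto_prod_one_sub hsum hsq).mul hratio).congr' ?_
  filter_upwards [eventually_abs_le_of_tendsto_sum_sq hsq one_half_pos] with a ha
  refine (sum_mul_prod_erase_one_sub _ _ fun i hi hx1 => ?_).symm
  have := ha i hi
  rw [hx1] at this
  norm_num at this

end TriangularArray

theorem one_point_probability_sum_tendsto_general (M c t : ℝ)
    (ci : ℕ → ℝ) (hci : ∀ i, 0 < ci i ∧ ci i ≤ M)
    (havg : Tendsto (fun n : ℕ => (∑ i ∈ Finset.range n, ci i) / n) atTop (nhds c)) :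
    Tendsto
      (fun n : ℕ => ∑ i ∈ Finset.range n,
        (ci i * t / n) * ∏ j ∈ (Finset.range n).erase i, (1 - ci j * t / n))
      atTop (nhds (c * t * Real.exp (-(c * t)))) := by
  have hsum : Tendsto (fun n : ℕ => ∑ i ∈ range n, ci i * t / n) atTop (𝓝 (c * t)) :=
    (havg.mul_const t).congr fun n => by rw [div_mul_eq_mul_div, sum_mul, sum_div]
  have hsq : Tendsto (fun n : ℕ => ∑ i ∈ range n, (ci i * t / n) ^ 2) atTop (𝓝 0) := by
    refine squeeze_zero (fun n => by positivity) (fun n => ?_)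
      (tendsto_const_div_atTop_nhds_zero_nat ((M * t) ^ 2))
    calc ∑ i ∈ range n, (ci i * t / n) ^ 2 ≤ ∑ i ∈ range n, (M * t / n) ^ 2 := by
          refine sum_le_sum fun i _ => ?_
          rw [div_pow, div_pow, mul_pow, mul_pow]
          gcongr
          exacts [(hci i).1.le, (hci i).2]
      _ = (M * t) ^ 2 / n := by
          rw [sum_const, card_range, nsmul_eq_mul]
          field_simp
  exact tendsto_sum_mul_prod_erase_one_sub hsum hsq

/-- One-point probabilities of superposed β-Ginibre processes converge to the Poisson
one-point probability: if `0 < c_i ≤ M` and `(1/n)Σ_{i<n} c_i → c`, then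
`Σ_{i<n} (c_i t/n)·Π_{j<n, j≠i} (1 − c_j t/n) → c t e^{−ct}`. -/
theorem one_point_probability_sum_tendsto (M c t : ℝ)
    (hM : 0 < M) (hc : 0 ≤ c) (ht : 0 ≤ t)
    (ci : ℕ → ℝ) (hci : ∀ i, 0 < ci i ∧ ci i ≤ M)
    (havg : Tendsto (fun n : ℕ => (∑ i ∈ Finset.range n, ci i) / n) atTop (nhds c)) :
    Tendsto
      (fun n : ℕ => ∑ i ∈ Finset.range n,
        (ci i * t / n) * ∏ j ∈ (Finset.range n).erase i, (1 - ci j * t / n))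
      atTop (nhds (c * t * Real.exp (-(c * t)))) :=
  one_point_probability_sum_tendsto_general M c t ci hci havg
end
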